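/- arXiv:1710.09466 — 2 statements merged into one kernel-verified Lean document; each statement's English description precedes it below -/
import Mathlib

section
/- The two-dimensional Bayesian incentive compatibility constraint (no consumer benefits from jointly misreporting its valuation and under-reporting its flexibility level) holds if and only if both one-dimensional constraints hold: (a) no consumer benefits from misreporting only its valuation, and (b) no consumer benefits from only under-reporting its flexibility level. -/
/-- The two-dimensional BIC constraint (no gain from jointly misreporting the
valuation and under-reporting the flexibility level) holds iff both
one-dimensional constraints hold: no gain from misreporting only the
valuation, and no gain from only under-reporting the flexibility level. -/
theorem stmt2 (k : ℕ) (θmin θmax : ℝ) (Ξ T : ℝ → Fin k → ℝ) :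
    (∀ θ ∈ Set.Icc θmin θmax, ∀ r ∈ Set.Icc θmin θmax,
      ∀ b c : Fin k, c ≤ b →
        θ * Ξ r c - T r c ≤ θ * Ξ θ b - T θ b) ↔
    ((∀ θ ∈ Set.Icc θmin θmax, ∀ r ∈ Set.Icc θmin θmax, ∀ b : Fin k,
        θ * Ξ r b - T r b ≤ θ * Ξ θ b - T θ b) ∧
     (∀ θ ∈ Set.Icc θmin θmax, ∀ b c : Fin k, c ≤ b →
        θ * Ξ θ c - T θ c ≤ θ * Ξ θ b - T θ b)) := by
  constructor
  · intro h
    exact ⟨fun θ hθ r hr b => h θ hθ r hr b b le_rfl,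
           fun θ hθ b c hcb => h θ hθ θ hθ b c hcb⟩
  · rintro ⟨ha, hb⟩ θ hθ r hr b c hcb
    exact (ha θ hθ r hr c).trans (hb θ hθ b c hcb)
end

section
/- Suppose a mechanism is individually rational and satisfies the valuation-misreport BIC constraint with Myerson payments. If (i) Ξ_i(θ_i, c_i) is non-decreasing in c_i for every θ_i, and (ii) T_i(θ_i^min, c_i) = 0 for every c_i, then the mechanism also satisfies the BIC constraint for under-reporting only the flexibility level: θ_i Ξ_i(θ_i, b_i) − T_i(θ_i, b_i) ≥ θ_i Ξ_i(θ_i, c_i) − T_i(θ_i, c_i) for all c_i ≤ b_i. -/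
/-- If the mechanism is individually rational, satisfies the
valuation-misreport BIC constraint with Myerson payments, the interim
allocation is non-decreasing in the reported flexibility level, and the
payment at the lowest valuation is zero, then no consumer gains from
under-reporting only its flexibility level. -/
theorem stmt6 (k : ℕ) (θmin θmax : ℝ) (hle : θmin ≤ θmax) (h0 : 0 ≤ θmin)
    (Ξ T : ℝ → Fin k → ℝ)
    (hmonoθ : ∀ c : Fin k, MonotoneOn (fun θ => Ξ θ c) (Set.Icc θmin θmax))
    (hrange : ∀ θ ∈ Set.Icc θmin θmax, ∀ c : Fin k, Ξ θ c ∈ Set.Icc (0 : ℝ) 1)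
    (hT : ∀ θ ∈ Set.Icc θmin θmax, ∀ c : Fin k,
      T θ c = T θmin c + θ * Ξ θ c - θmin * Ξ θmin c - ∫ s in θmin..θ, Ξ s c)
    (hIR : ∀ θ ∈ Set.Icc θmin θmax, ∀ c : Fin k, 0 ≤ θ * Ξ θ c - T θ c)
    (hmonoc : ∀ θ ∈ Set.Icc θmin θmax, ∀ c c' : Fin k, c ≤ c' → Ξ θ c ≤ Ξ θ c')
    (hT0 : ∀ c : Fin k, T θmin c = 0) :
    ∀ θ ∈ Set.Icc θmin θmax, ∀ b c : Fin k, c ≤ b →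
      θ * Ξ θ c - T θ c ≤ θ * Ξ θ b - T θ b := by
  intro θ hθ b c hcb
  have hmem : θmin ∈ Set.Icc θmin θmax := ⟨le_refl _, hle⟩
  have hU : ∀ d : Fin k, θ * Ξ θ d - T θ d
      = θmin * Ξ θmin d + ∫ s in θmin..θ, Ξ s d := by
    intro d
    rw [hT θ hθ d, hT0 d]
    ring
  rw [hU b, hU c]
  have hint : ∀ d : Fin k, IntervalIntegrable (fun s => Ξ s d)
      MeasureTheory.volume θmin θ := by
    intro d
    exact ((hmonoθ d).mono (by rw [Set.uIcc_of_le hθ.1]; exact Set.Icc_subset_Icc le_rfl hθ.2)).intervalIntegrable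
  have hle2 : (∫ s in θmin..θ, Ξ s c) ≤ ∫ s in θmin..θ, Ξ s b := by
    apply intervalIntegral.integral_mono_on hθ.1 (hint c) (hint b)
    intro s hs
    exact hmonoc s ⟨hs.1, hs.2.trans hθ.2⟩ c b hcb
  have := hmonoc θmin hmem c b hcb
  nlinarith
end
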